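/- Let σ, σ_ν be symmetric positive definite n×n matrices, γ ≥ 0, T > 0. Write (σσ_ν²σ)/T = UᵀDU with U orthogonal and D diagonal with positive entries d_i. Define ã_i = 1/(Tγ/2 + √(T²γ²/4 + 1/d_i)) and Ã = diag(ã_i), A = σ⁻¹UᵀÃUσ⁻¹. Then A is symmetric positive definite, I − TγσAσ is positive definite, and A satisfies σAσ(I − TγσAσ)⁻¹σAσ = (σσ_ν²σ)/T. -/

import Mathlib

open scoped Matrix

lemma conj_posDef {n : ℕ} {M B : Matrix (Fin n) (Fin n) ℝ} (hM : M.PosDef) (hB : IsUnit B) :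
    (Bᵀ * M * B).PosDef := by
  have hMt : Mᵀ = M := by
    rw [← Matrix.conjTranspose_eq_transpose_of_trivial]; exact hM.isHermitian
  refine Matrix.PosDef.of_dotProduct_mulVec_pos ?_ ?_
  · show (Bᵀ * M * B)ᴴ = _
    simp [Matrix.conjTranspose_mul, Matrix.conjTranspose_eq_transpose_of_trivial,
      Matrix.mul_assoc, hMt]
  · intro x hx
    have hinj : Function.Injective B.mulVec := Matrix.mulVec_injective_iff_isUnit.mpr hB
    have hBx : B.mulVec x ≠ 0 := fun h => hx (hinj (by simpa using h))
    have hpos := hM.dotProduct_mulVec_pos hBx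
    have e : star x ⬝ᵥ (Bᵀ * M * B) *ᵥ x = star (B *ᵥ x) ⬝ᵥ M *ᵥ (B *ᵥ x) := by
      rw [Matrix.mul_assoc, ← Matrix.mulVec_mulVec, star_trivial, star_trivial,
        Matrix.dotProduct_mulVec, Matrix.vecMul_transpose, ← Matrix.mulVec_mulVec]
    rw [e]; exact hpos

/-- Explicit solution of the matrix fixed-point equation for the Gaussian equilibrium:
diagonalizing `(σσν²σ)/T = UᵀDU` and setting `ã_i = 1/(Tγ/2 + √(T²γ²/4 + 1/d_i))`,
`A = σ⁻¹UᵀÃUσ⁻¹` is symmetric positive definite, `I − TγσAσ` is positive definite, and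
`σAσ(I − TγσAσ)⁻¹σAσ = (σσν²σ)/T`. -/
theorem stmt17 {n : ℕ} (T γ : ℝ) (hT : 0 < T) (hγ : 0 ≤ γ)
    (σ σν : Matrix (Fin n) (Fin n) ℝ) (hσ : σ.PosDef) (hσν : σν.PosDef)
    (U : Matrix (Fin n) (Fin n) ℝ) (hU : Uᵀ * U = 1)
    (d : Fin n → ℝ) (hd : ∀ i, 0 < d i)
    (hdiag : (1 / T) • (σ * (σν * σν) * σ) = Uᵀ * Matrix.diagonal d * U)
    (a : Fin n → ℝ)
    (ha : a = fun i => 1 / (T * γ / 2 + Real.sqrt (T ^ 2 * γ ^ 2 / 4 + 1 / d i)))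
    (A : Matrix (Fin n) (Fin n) ℝ)
    (hA : A = σ⁻¹ * Uᵀ * Matrix.diagonal a * U * σ⁻¹) :
    A.PosDef ∧ (1 - (T * γ) • (σ * A * σ)).PosDef ∧
      σ * A * σ * (1 - (T * γ) • (σ * A * σ))⁻¹ * (σ * A * σ)
        = (1 / T) • (σ * (σν * σν) * σ) := by
  set s : ℝ := T * γ / 2 with hs
  have hs0 : 0 ≤ s := by positivity
  have key : ∀ i, 0 < a i ∧ 0 < 1 - T * γ * a i ∧ a i ^ 2 = d i * (1 - T * γ * a i) := by
    intro i
    set r : ℝ := Real.sqrt (T ^ 2 * γ ^ 2 / 4 + 1 / d i) with hr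
    have hdi := hd i
    have hr2 : r ^ 2 = s ^ 2 + 1 / d i := by
      rw [hr, Real.sq_sqrt (by positivity), hs]; ring_nf
    have hrs : s < r := by
      nlinarith [Real.sqrt_nonneg (T ^ 2 * γ ^ 2 / 4 + 1 / d i), one_div_pos.mpr hdi]
    have hsr0 : 0 < s + r := by linarith
    have hai : a i = 1 / (s + r) := by rw [ha]
    have ha0 : 0 < a i := by rw [hai]; positivity
    have h1 : 1 - T * γ * a i = (r - s) / (s + r) := by
      rw [hai]; field_simp; ring
    refine ⟨ha0, by rw [h1]; exact div_pos (by linarith) hsr0, ?_⟩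
    have hrs2 : d i * (r ^ 2 - s ^ 2) = 1 := by
      rw [hr2]; field_simp; ring
    rw [h1, hai]
    field_simp
    nlinarith [hrs2]
  -- invertibility facts
  have hσdet : IsUnit σ.det := isUnit_iff_ne_zero.mpr hσ.det_pos.ne'
  have hσσ : σ * σ⁻¹ = 1 := Matrix.mul_nonsing_inv σ hσdet
  have hσσ' : σ⁻¹ * σ = 1 := Matrix.nonsing_inv_mul σ hσdet
  have hUU : U * Uᵀ = 1 := mul_eq_one_comm.mp hU
  have hσit : (σ⁻¹)ᵀ = σ⁻¹ := by
    have hσt : σᵀ = σ := by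
      rw [← Matrix.conjTranspose_eq_transpose_of_trivial]; exact hσ.isHermitian
    rw [Matrix.transpose_nonsing_inv, hσt]
  have hσAσ : σ * A * σ = Uᵀ * Matrix.diagonal a * U := by
    rw [hA]
    calc σ * (σ⁻¹ * Uᵀ * Matrix.diagonal a * U * σ⁻¹) * σ
        = (σ * σ⁻¹) * (Uᵀ * Matrix.diagonal a * U) * (σ⁻¹ * σ) := by
          simp only [Matrix.mul_assoc]
      _ = Uᵀ * Matrix.diagonal a * U := by rw [hσσ, hσσ', Matrix.one_mul, Matrix.mul_one]
  have hone : (1 : Matrix (Fin n) (Fin n) ℝ) - (T * γ) • (σ * A * σ)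
      = Uᵀ * Matrix.diagonal (fun i => 1 - T * γ * a i) * U := by
    rw [hσAσ]
    have hD : (Matrix.diagonal (fun i => 1 - T * γ * a i) : Matrix (Fin n) (Fin n) ℝ)
        = 1 - (T * γ) • Matrix.diagonal a := by
      rw [← Matrix.diagonal_one, ← Matrix.diagonal_smul, ← Matrix.diagonal_sub]
      rfl
    rw [hD, Matrix.mul_sub, Matrix.sub_mul, Matrix.mul_one, hU]
    congr 1
    rw [Matrix.mul_smul, Matrix.smul_mul]
  have hUdet : IsUnit U.det := Matrix.isUnit_det_of_right_inverse hUU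
  have hUunit : IsUnit U := (Matrix.isUnit_iff_isUnit_det _).mpr hUdet
  have hσiunit : IsUnit (σ⁻¹) := ⟨⟨σ⁻¹, σ, hσσ', hσσ⟩, rfl⟩
  refine ⟨?_, ?_, ?_⟩
  · rw [hA]
    have hrw : σ⁻¹ * Uᵀ * Matrix.diagonal a * U * σ⁻¹
        = (U * σ⁻¹)ᵀ * Matrix.diagonal a * (U * σ⁻¹) := by
      rw [Matrix.transpose_mul, hσit]
      simp only [Matrix.mul_assoc]
    rw [hrw]
    exact conj_posDef (Matrix.PosDef.diagonal fun i => (key i).1) (hUunit.mul hσiunit)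
  · rw [hone]
    exact conj_posDef (Matrix.PosDef.diagonal fun i => (key i).2.1) hUunit
  · have hDD : Matrix.diagonal (fun i => 1 - T * γ * a i)
        * Matrix.diagonal (fun i => (1 - T * γ * a i)⁻¹) = (1 : Matrix (Fin n) (Fin n) ℝ) := by
      have hfun : (fun i => (1 - T * γ * a i) * (1 - T * γ * a i)⁻¹) = fun _ => (1 : ℝ) :=
        funext fun i => mul_inv_cancel₀ (key i).2.1.ne'
      rw [Matrix.diagonal_mul_diagonal, hfun, Matrix.diagonal_one]
    have hinv : ((1 : Matrix (Fin n) (Fin n) ℝ) - (T * γ) • (σ * A * σ))⁻¹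
        = Uᵀ * Matrix.diagonal (fun i => (1 - T * γ * a i)⁻¹) * U := by
      apply Matrix.inv_eq_right_inv
      rw [hone]
      calc Uᵀ * Matrix.diagonal (fun i => 1 - T * γ * a i) * U
            * (Uᵀ * Matrix.diagonal (fun i => (1 - T * γ * a i)⁻¹) * U)
          = Uᵀ * (Matrix.diagonal (fun i => 1 - T * γ * a i) * (U * Uᵀ)
              * Matrix.diagonal (fun i => (1 - T * γ * a i)⁻¹)) * U := by
            simp only [Matrix.mul_assoc]
        _ = 1 := by rw [hUU, Matrix.mul_one, hDD, Matrix.mul_one, hU]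
    rw [hinv, hσAσ, hdiag]
    calc Uᵀ * Matrix.diagonal a * U * (Uᵀ * Matrix.diagonal (fun i => (1 - T * γ * a i)⁻¹) * U)
        * (Uᵀ * Matrix.diagonal a * U)
        = Uᵀ * (Matrix.diagonal a * (U * Uᵀ) * Matrix.diagonal (fun i => (1 - T * γ * a i)⁻¹)
            * (U * Uᵀ) * Matrix.diagonal a) * U := by
          simp only [Matrix.mul_assoc]
      _ = Uᵀ * Matrix.diagonal d * U := by
          have hfd : (fun i => a i * (1 - T * γ * a i)⁻¹ * a i) = d := by
            funext i
            obtain ⟨h1, h2, h3⟩ := key i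
            have e : a i * (1 - T * γ * a i)⁻¹ * a i
                = a i ^ 2 * (1 - T * γ * a i)⁻¹ := by ring
            rw [e, h3, mul_assoc, mul_inv_cancel₀ h2.ne', mul_one]
          rw [hUU, Matrix.mul_one, Matrix.mul_one]
          simp only [Matrix.diagonal_mul_diagonal]
          rw [hfd]
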